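/- arXiv:1307.5658 — 4 statements merged into one kernel-verified Lean document; each statement's English description precedes it below -/
import Mathlib

section
/- If (A, a) is a preadic ring with a finitely generated, then the completion Λ_a(A) = lim_n A/aⁿ is a noetherian ring if and only if A/a is a noetherian ring. -/
/-!
The completion `Λ = Λ_a(A)` is complete for the finitely generated ideal `aΛ`, and
`Λ ⧸ aΛ ≃ A ⧸ a`; so it suffices to show that a ring `R` which is complete for a finitely
generated ideal `J = (x₁, …, xᵣ)` with `R ⧸ J` noetherian is noetherian (Stacks 05GH).
The associated graded ring `gr_J R` is a quotient of the noetherian ring `(R ⧸ J)[X₁, …, Xᵣ]`,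
so for an ideal `I` the graded ideal `gr_J I` is generated by the initial forms of finitely many
`fᵢ ∈ I ∩ J ^ dᵢ`. Successive approximation writes any `y ∈ I` as `∑ bᵢ fᵢ` with each `bᵢ` the sum
of a `J`-adically convergent series, so `I = (f₁, …, f_k)`.
-/

open MvPolynomial Finset

theorem MvPolynomial.homogeneousComponent_mul_of_isHomogeneous {σ R : Type*} [CommSemiring R]
    {q : MvPolynomial σ R} {j : ℕ} (hq : q.IsHomogeneous j) (a : MvPolynomial σ R) (n : ℕ) :
    homogeneousComponent n (a * q) = if j ≤ n then homogeneousComponent (n - j) a * q else 0 := by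
  let := MvPolynomial.gradedAlgebra (σ := σ) (R := R)
  rw [← decomposition.decompose'_apply, ← decomposition.decompose'_apply]
  exact DirectSum.coe_decompose_mul_of_right_mem _ n ((mem_homogeneousSubmodule _ _).2 hq)

namespace Ideal

variable {R : Type*} [CommRing R]

theorem exists_sum_eq_of_mem_iSup_mul_span_singleton {κ : Type*} {s : Finset κ}
    {K : κ → Ideal R} {f : κ → R} {y : R} (hy : y ∈ ⨆ i ∈ s, K i * span {f i}) :
    ∃ c : κ → R, (∀ i, c i ∈ K i) ∧ ∑ i ∈ s, c i * f i = y := by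
  obtain ⟨μ, rfl⟩ := (Submodule.mem_iSup_finset_iff_exists_sum _ y).1 hy
  choose c hc hcμ using fun i => mem_mul_span_singleton.1 (μ i).2
  exact ⟨c, hc, sum_congr rfl fun i _ => hcμ i⟩

theorem smodEq_pow_smul_top_iff {J : Ideal R} {n : ℕ} {x y : R} :
    x ≡ y [SMOD (J ^ n • ⊤ : Submodule R R)] ↔ x - y ∈ J ^ n := by
  rw [SModEq.sub_mem, smul_eq_mul, mul_top]

theorem _root_.IsPrecomplete.exists_sub_sum_range_mem {J : Ideal R} [IsPrecomplete J R]
    {a : ℕ → R} {e : ℕ} (ha : ∀ m, a m ∈ J ^ (m - e)) :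
    ∃ b, ∀ n, b - ∑ m ∈ range n, a m ∈ J ^ (n - e) := by
  have hcauchy {k n : ℕ} (hkn : k ≤ n) :
      ∑ m ∈ range (k + e), a m ≡ ∑ m ∈ range (n + e), a m [SMOD (J ^ k • ⊤ : Submodule R R)] := by
    rw [smodEq_pow_smul_top_iff, ← neg_mem_iff, neg_sub,
      ← sum_range_add_sum_Ico _ (by omega : k + e ≤ n + e), add_sub_cancel_left]
    exact sum_mem _ fun m hm => pow_le_pow_right (by simp at hm; omega) (ha m)
  obtain ⟨b, hb⟩ := IsPrecomplete.prec ‹_› hcauchy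
  refine ⟨b, fun n => ?_⟩
  rcases le_or_gt e n with hen | hne
  · have := smodEq_pow_smul_top_iff.1 (hb (n - e))
    rwa [Nat.sub_add_cancel hen, ← neg_mem_iff, neg_sub] at this
  · simp [Nat.sub_eq_zero_of_le hne.le]

theorem exists_finset_subset_span_image_eq {α M : Type*} [CommRing M] [IsNoetherianRing M]
    (f : α → M) (H : Set α) : ∃ t : Finset α, ↑t ⊆ H ∧ span (f '' H) = span (f '' t) := by
  classical
  obtain ⟨t', ht'H, hspan⟩ :=
    (Submodule.fg_span_iff_fg_span_finset_subset _).1 (IsNoetherian.noetherian (span (f '' H)))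
  obtain ⟨t, htH, rfl⟩ := Finset.subset_set_image_iff.1 ht'H
  exact ⟨t, htH, by rwa [coe_image] at hspan⟩

/-- The initial forms of the `p.2`, placed in degree `p.1`, generate the ideal `gr_J I` of the
associated graded ring `gr_J R`. (When `p.1 > n`, the truncated `n - p.1 = 0` is harmless, since
then `p.2 ∈ J ^ (n + 1)`.) -/
structure IsStandardBasis (J I : Ideal R) (s : Finset (ℕ × R)) : Prop where
  mem_inf_pow : ∀ p ∈ s, p.2 ∈ I ⊓ J ^ p.1
  inf_pow_le : ∀ n, I ⊓ J ^ n ≤ (⨆ p ∈ s, J ^ (n - p.1) * span {p.2}) ⊔ J ^ (n + 1)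

theorem eval_homogeneousComponent_mem_of_mem_span {ι : Type*} (x : ι → R)
    {s : Finset (ℕ × R)} {L : ℕ × R → MvPolynomial ι R}
    (hL : ∀ p ∈ s, (L p).IsHomogeneous p.1 ∧ eval x (L p) = p.2) (n : ℕ)
    {g : MvPolynomial ι R} (hg : g ∈ span (L '' s ∪ C '' span (Set.range x))) :
    eval x (homogeneousComponent n g) ∈
      (⨆ p ∈ s, span (Set.range x) ^ (n - p.1) * span {p.2}) ⊔ span (Set.range x) ^ (n + 1) := by
  have eval_mem_pow (m : ℕ) (a : MvPolynomial ι R) :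
      eval x (homogeneousComponent m a) ∈ span (Set.range x) ^ m :=
    (mem_span_pow_iff_exists_isHomogeneous x _).2 ⟨_, homogeneousComponent_isHomogeneous m a, rfl⟩
  -- strengthened to all multiples of `g`, so that it survives the span induction
  suffices ∀ a, eval x (homogeneousComponent n (a * g)) ∈
      (⨆ p ∈ s, span (Set.range x) ^ (n - p.1) * span {p.2}) ⊔ span (Set.range x) ^ (n + 1) by
    simpa using this 1
  induction hg using Submodule.span_induction with
  | mem q hq =>
    intro a
    rcases hq with ⟨p, hp, rfl⟩ | ⟨r, hr, rfl⟩
    · rw [homogeneousComponent_mul_of_isHomogeneous (hL p hp).1]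
      split_ifs
      · rw [map_mul, (hL p hp).2]
        refine mem_sup_left (Submodule.mem_iSup_of_mem p (Submodule.mem_iSup_of_mem hp ?_))
        exact mul_mem_mul (eval_mem_pow _ a) (mem_span_singleton_self _)
      · simp
    · rw [mul_comm, homogeneousComponent_C_mul, map_mul, eval_C, pow_succ']
      exact mem_sup_right (mul_mem_mul hr (eval_mem_pow n a))
  | zero => simp
  | add g₁ g₂ _ _ h₁ h₂ =>
    intro a
    rw [mul_add, map_add, map_add]
    exact add_mem (h₁ a) (h₂ a)
  | smul b g _ h =>
    intro a
    rw [smul_eq_mul, ← mul_assoc]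
    exact h (a * b)

theorem exists_isStandardBasis {ι : Type*} [Finite ι] (x : ι → R)
    [IsNoetherianRing (R ⧸ span (Set.range x))] (I : Ideal R) :
    ∃ s, IsStandardBasis (span (Set.range x)) I s := by
  set J := span (Set.range x)
  choose! L hL hLx using fun (p : ℕ × R) (hp : p.2 ∈ J ^ p.1) =>
    (mem_span_pow_iff_exists_isHomogeneous x p.2).1 hp
  let red : MvPolynomial ι R →+* MvPolynomial ι (R ⧸ J) := MvPolynomial.map (Quotient.mk J)
  obtain ⟨s, hsH, hspan⟩ :=
    exists_finset_subset_span_image_eq (red ∘ L) {p : ℕ × R | p.2 ∈ I ⊓ J ^ p.1}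
  refine ⟨s, ⟨fun p hp => hsH hp, fun n y hy => ?_⟩⟩
  -- modulo the kernel `J[X]` of `red`, the lift `L (n, y)` is a combination of the `L p`, `p ∈ s`
  have hLy : L (n, y) ∈ span (L '' s ∪ C '' J) := by
    have hred : red (L (n, y)) ∈ map red (span (L '' s)) := by
      rw [map_span, ← Set.image_comp, ← hspan]
      exact subset_span ⟨(n, y), hy, rfl⟩
    rw [← mem_comap, comap_map_of_surjective red
      (MvPolynomial.map_surjective _ Quotient.mk_surjective), ← RingHom.ker_eq_comap_bot,
      ker_map, mk_ker] at hred
    rwa [span_union]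
  have := eval_homogeneousComponent_mem_of_mem_span x
    (fun p hp => ⟨hL p (hsH hp).2, hLx p (hsH hp).2⟩) n hLy
  rwa [homogeneousComponent_eq_self (hL (n, y) hy.2), hLx (n, y) hy.2] at this

namespace IsStandardBasis

variable {J I : Ideal R} {s : Finset (ℕ × R)}

theorem exists_sub_sum_mem (hs : IsStandardBasis J I s) (n : ℕ) (z : R) :
    ∃ c : ℕ × R → R, (∀ p, c p ∈ J ^ (n - p.1)) ∧
      (z ∈ I ⊓ J ^ n → z - ∑ p ∈ s, c p * p.2 ∈ I ⊓ J ^ (n + 1)) := by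
  by_cases hz : z ∈ I ⊓ J ^ n
  · obtain ⟨u, hu, v, hv, rfl⟩ := Submodule.mem_sup.1 (hs.inf_pow_le n hz)
    obtain ⟨c, hc, rfl⟩ := exists_sum_eq_of_mem_iSup_mul_span_singleton hu
    refine ⟨c, hc, fun _ => ⟨?_, by rwa [add_sub_cancel_left]⟩⟩
    exact sub_mem hz.1 (sum_mem _ fun p hp => mul_mem_left _ _ (hs.mem_inf_pow p hp).1)
  · exact ⟨0, fun _ => zero_mem _, fun h => absurd h hz⟩

theorem span_eq [IsAdicComplete J R] (hs : IsStandardBasis J I s) :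
    span (Prod.snd '' (s : Set (ℕ × R))) = I := by
  refine le_antisymm (span_le.2 ?_) fun y hy => ?_
  · rintro _ ⟨p, hp, rfl⟩
    exact (hs.mem_inf_pow p hp).1
  choose c hc hcI using hs.exists_sub_sum_mem
  let r : ℕ → R := fun n => Nat.rec y (fun n z => z - ∑ p ∈ s, c n z p * p.2) n
  have hr : ∀ n, r n ∈ I ⊓ J ^ n := by
    intro n
    induction n with
    | zero => simpa [r] using hy
    | succ n ih => exact hcI n (r n) ih
  have hr_eq : ∀ n, r n = y - ∑ p ∈ s, (∑ m ∈ range n, c m (r m) p) * p.2 := by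
    intro n
    induction n with
    | zero => simp [r]
    | succ n ih =>
      simp only [sum_range_succ, add_mul, sum_add_distrib]
      rw [← sub_sub, ← ih]
  choose b hb using fun p : ℕ × R =>
    IsPrecomplete.exists_sub_sum_range_mem (J := J) fun m => hc m (r m) p
  have hlim : ∀ n, y - ∑ p ∈ s, b p * p.2 ∈ J ^ n := by
    intro n
    have : y - ∑ p ∈ s, b p * p.2 =
        r n - ∑ p ∈ s, (b p - ∑ m ∈ range n, c m (r m) p) * p.2 := by
      rw [hr_eq n]
      simp only [sub_mul, sum_sub_distrib]
      ring
    rw [this]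
    refine sub_mem (hr n).2 (sum_mem _ fun p hp => ?_)
    have := mul_mem_mul (hb p n) (hs.mem_inf_pow p hp).2
    rw [← pow_add] at this
    exact pow_le_pow_right (by omega) this
  have : y = ∑ p ∈ s, b p * p.2 :=
    sub_eq_zero.1 <| IsHausdorff.haus (I := J) inferInstance _ fun n =>
      smodEq_pow_smul_top_iff.2 (by simpa using hlim n)
  rw [this]
  exact sum_mem _ fun p hp => mul_mem_left _ _ (subset_span ⟨p, hp, rfl⟩)

end IsStandardBasis

theorem _root_.IsAdicComplete.isNoetherianRing {J : Ideal R} (hJ : J.FG) [IsAdicComplete J R]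
    [IsNoetherianRing (R ⧸ J)] : IsNoetherianRing R := by
  classical
  obtain ⟨_, x, rfl⟩ := Submodule.fg_iff_exists_fin_generating_family.1 hJ
  refine (isNoetherianRing_iff_ideal_fg R).2 fun I => ?_
  obtain ⟨s, hs⟩ := exists_isStandardBasis x I
  exact ⟨s.image Prod.snd, by rw [coe_image, hs.span_eq]⟩

end Ideal

open AdicCompletion in
/-- If `(A, a)` is a preadic ring with `a` finitely generated, then the
`a`-adic completion `Λ_a(A) = lim_n A/aⁿ` is a noetherian ring if and only if
`A/a` is a noetherian ring. -/
theorem isNoetherianRing_adicCompletion_iff {A : Type*} [CommRing A]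
    (a : Ideal A) (ha : a.FG) :
    IsNoetherianRing (AdicCompletion a A) ↔ IsNoetherianRing (A ⧸ a) := by
  refine ⟨fun _ => isNoetherianRing_of_surjective _ _ (evalOneₐ a).toRingHom
    (evalOneₐ_surjective a), fun _ => ?_⟩
  have := isAdicComplete_self a ha
  have : IsNoetherianRing (AdicCompletion a A ⧸ a.map (algebraMap A (AdicCompletion a A))) :=
    isNoetherianRing_of_ringEquiv _ ((Ideal.quotEquivOfEq (ker_evalOneₐ_eq_map a ha)).symm.trans
      (RingHom.quotientKerEquivOfSurjective (evalOneₐ_surjective a))).symm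
  exact IsAdicComplete.isNoetherianRing (ha.map (algebraMap A (AdicCompletion a A)))
end

section
/- Let k be a noetherian ring and A a noetherian adic k-algebra (with defining ideal a) such that A/a is essentially of finite type over k. If (B, b) is an adic ring which is an essentially formally of finite type (A, a)-algebra (i.e., B/b is essentially of finite type over A), then B is a noetherian ring. -/
/-!
This is Stacks 05GH applied to `(B, b)`: the quotient `B ⧸ b` is essentially of finite type over
the noetherian ring `A`, hence noetherian, and a ring complete for a finitely generated ideal with
noetherian quotient is noetherian.

For the latter, `reesAlgebra I ⧸ I • reesAlgebra I` is the associated graded ring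
`⊕ Iⁿ / Iⁿ⁺¹`, a finitely generated `R ⧸ I`-algebra and so noetherian. Given an ideal `J`, the
initial forms `y Xⁿ` (`y ∈ J ∩ Iⁿ`) therefore generate, modulo `I • reesAlgebra I`, the same
ideal as finitely many of them, say those of `x₁, …, xᵣ`, of degrees at most `D`. Comparing
coefficients of `X^N` shows that every `y ∈ J ∩ I^N` is `∑ aᵢ xᵢ` modulo `I^(N+1)` with
`aᵢ ∈ I^(N-D)`. Iterating this and passing to the `I`-adic limits of the coefficients writes
every `y ∈ J` as `∑ cᵢ xᵢ`.
-/

open Polynomial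

universe u

namespace Ideal

theorem exists_finset_subset_span_image_le_sup {A α : Type*} [CommRing A] (𝔦 : Ideal A)
    [IsNoetherianRing (A ⧸ 𝔦)] (v : α → A) (s : Set α) :
    ∃ t : Finset α, ↑t ⊆ s ∧ span (v '' s) ≤ span (v '' t) ⊔ 𝔦 := by
  classical
  obtain ⟨s', hs's, hspan⟩ := (Submodule.fg_span_iff_fg_span_finset_subset
    ((Quotient.mk 𝔦 ∘ v) '' s)).mp (IsNoetherian.noetherian (R := A ⧸ 𝔦) _)
  obtain ⟨t, hts, rfl⟩ := Finset.subset_set_image_iff.mp hs's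
  refine ⟨t, hts, ?_⟩
  have hmap : ∀ u : Set α, (span (v '' u)).map (Quotient.mk 𝔦) = span ((Quotient.mk 𝔦 ∘ v) '' u) :=
    fun u => by rw [map_span, Set.image_comp]
  rw [← mk_ker (I := 𝔦), RingHom.ker_eq_comap_bot, ← comap_map_of_surjective _
    Quotient.mk_surjective, ← map_le_iff_le_comap, hmap, hmap]
  rw [Finset.coe_image] at hspan
  exact hspan.le

end Ideal

section ReesAlgebra

variable {R : Type u} [CommRing R] {I : Ideal R}

theorem isNoetherianRing_reesAlgebra_quotient_map (hI : I.FG) [IsNoetherianRing (R ⧸ I)] :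
    IsNoetherianRing (reesAlgebra I ⧸ I.map (algebraMap R (reesAlgebra I))) := by
  have : Algebra.FiniteType R (reesAlgebra I) := ⟨(Subalgebra.fg_top _).mpr (reesAlgebra.fg hI)⟩
  have := Algebra.FiniteType.of_restrictScalars_finiteType R (R ⧸ I)
    (reesAlgebra I ⧸ I.map (algebraMap R (reesAlgebra I)))
  exact Algebra.FiniteType.isNoetherianRing (R ⧸ I)
    (reesAlgebra I ⧸ I.map (algebraMap R (reesAlgebra I)))

theorem reesAlgebra.coeff_mem_pow_succ_of_mem_map {f : reesAlgebra I}
    (hf : f ∈ I.map (algebraMap R (reesAlgebra I))) (n : ℕ) : (f : R[X]).coeff n ∈ I ^ (n + 1) := by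
  rw [← Submodule.restrictScalars_mem R, ← Ideal.smul_top_eq_map] at hf
  refine Submodule.smul_induction_on hf
    (p := fun g : reesAlgebra I => (g : R[X]).coeff n ∈ I ^ (n + 1))
    (fun a ha g _ => ?_) (fun g h hg hh => ?_)
  · rw [Subalgebra.coe_smul, coeff_smul, smul_eq_mul, pow_succ']
    exact Ideal.mul_mem_mul ha ((mem_reesAlgebra_iff I _).mp g.2 n)
  · rw [Subalgebra.coe_add, coeff_add]
    exact add_mem hg hh

theorem exists_fintype_sub_sum_mem_pow_succ (hI : I.FG) [IsNoetherianRing (R ⧸ I)]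
    (J : Ideal R) :
    ∃ (ι : Type u) (_ : Fintype ι) (x : ι → R) (D : ℕ), (∀ i, x i ∈ J) ∧
      ∀ N, ∀ y ∈ J, y ∈ I ^ N →
        ∃ a : ι → R, (∀ i, a i ∈ I ^ (N - D)) ∧ y - ∑ i, a i * x i ∈ I ^ (N + 1) := by
  classical
  have := isNoetherianRing_reesAlgebra_quotient_map hI
  let v : (Σ d : ℕ, ↥(I ^ d)) → reesAlgebra I :=
    fun p => ⟨monomial p.1 (p.2 : R), reesAlgebra.monomial_mem.mpr p.2.2⟩
  obtain ⟨t, htJ, hspan⟩ := Ideal.exists_finset_subset_span_image_le_sup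
    (I.map (algebraMap R (reesAlgebra I))) v {p | (p.2 : R) ∈ J}
  refine ⟨t, inferInstance, fun p => p.1.2, t.sup (·.1), fun p => htJ p.2, ?_⟩
  intro N y hyJ hyN
  obtain ⟨g, hg, w, hw, hgw⟩ := Submodule.mem_sup.mp
    (hspan (Ideal.subset_span ⟨⟨N, y, hyN⟩, hyJ, rfl⟩))
  obtain ⟨c, rfl⟩ := (Submodule.mem_span_image_finset_iff_exists_fun (R := reesAlgebra I)).mp hg
  refine ⟨fun p => if p.1.1 ≤ N then (c p : R[X]).coeff (N - p.1.1) else 0, fun p => ?_, ?_⟩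
  · have hd : p.1.1 ≤ t.sup (·.1) := Finset.le_sup (f := (·.1)) p.2
    dsimp only
    split_ifs
    · exact Ideal.pow_le_pow_right (by omega) ((mem_reesAlgebra_iff I _).mp (c p).2 _)
    · exact zero_mem _
  · have hcoeff : ∀ p : t, ((c p * v p : reesAlgebra I) : R[X]).coeff N =
        (if p.1.1 ≤ N then (c p : R[X]).coeff (N - p.1.1) else 0) * p.1.2 := fun p => by
      change ((c p : R[X]) * monomial p.1.1 (p.1.2 : R)).coeff N = _
      rw [← C_mul_X_pow_eq_monomial, ← mul_assoc, coeff_mul_X_pow', ite_mul, zero_mul, coeff_mul_C]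
    have hw' : w = v ⟨N, y, hyN⟩ - ∑ p, c p * v p := eq_sub_of_add_eq' hgw
    convert reesAlgebra.coeff_mem_pow_succ_of_mem_map hw N
    rw [hw', Subalgebra.coe_sub, coeff_sub, AddSubmonoidClass.coe_finsetSum, finsetSum_coeff]
    simp only [hcoeff]
    change _ = (monomial N y).coeff N - _
    rw [coeff_monomial_same]

end ReesAlgebra

section Completeness

variable {R : Type*} [CommRing R] {I J : Ideal R} {ι : Type*} [Fintype ι] {x : ι → R}

theorem exists_seq_sub_sum_mem_pow {D : ℕ} (hxJ : ∀ i, x i ∈ J)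
    (H : ∀ N, ∀ y ∈ J, y ∈ I ^ N →
      ∃ a : ι → R, (∀ i, a i ∈ I ^ (N - D)) ∧ y - ∑ i, a i * x i ∈ I ^ (N + 1))
    {y : R} (hy : y ∈ J) :
    ∃ c : ℕ → ι → R, (∀ n i, c (n + 1) i - c n i ∈ I ^ (n - D)) ∧
      ∀ n, y - ∑ i, c n i * x i ∈ I ^ n := by
  choose! a ha using H
  let c : ℕ → ι → R := fun n => Nat.rec 0 (fun n cn => cn + a n (y - ∑ i, cn i * x i)) n
  have hsum_mem : ∀ (b : ι → R), ∑ i, b i * x i ∈ J :=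
    fun b => Ideal.sum_mem _ fun i _ => J.mul_mem_left _ (hxJ i)
  have hc : ∀ n, y - ∑ i, c n i * x i ∈ J ∧ y - ∑ i, c n i * x i ∈ I ^ n := by
    intro n
    induction n with
    | zero => simpa [c] using hy
    | succ n ih =>
      have hstep : y - ∑ i, c (n + 1) i * x i =
          (y - ∑ i, c n i * x i) - ∑ i, a n (y - ∑ i, c n i * x i) i * x i := by
        simp only [c, Pi.add_apply, add_mul, Finset.sum_add_distrib]
        ring
      rw [hstep]
      exact ⟨J.sub_mem ih.1 (hsum_mem _), (ha n _ ih.1 ih.2).2⟩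
  refine ⟨c, fun n i => ?_, fun n => (hc n).2⟩
  simpa [c] using (ha n _ (hc n).1 (hc n).2).1 i

theorem mem_span_range_of_sub_sum_mem_pow [IsAdicComplete I R] {y : R} (c : ℕ → ι → R)
    (hc : ∀ n i, c (n + 1) i - c n i ∈ I ^ n) (hy : ∀ n, y - ∑ i, c n i * x i ∈ I ^ n) :
    y ∈ Ideal.span (Set.range x) := by
  have hpow : ∀ n, (I ^ n • ⊤ : Submodule R R) = I ^ n := fun n => by
    rw [smul_eq_mul, Ideal.mul_top]
  have hlim : ∀ i, ∃ L, ∀ n, c n i ≡ L [SMOD (I ^ n • ⊤ : Submodule R R)] := fun i =>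
    IsPrecomplete.prec inferInstance <|
      (AdicCompletion.isAdicCauchy_iff I R (fun n => c n i)).mpr fun n => by
      rw [SModEq.sub_mem, hpow, ← neg_sub]
      exact neg_mem (hc n i)
  choose L hL using hlim
  have hdiff : ∀ n, y - ∑ i, L i * x i ∈ I ^ n := fun n => by
    have hsplit : y - ∑ i, L i * x i = (y - ∑ i, c n i * x i) + ∑ i, (c n i - L i) * x i := by
      simp only [sub_mul, Finset.sum_sub_distrib]
      ring
    rw [hsplit]
    refine add_mem (hy n) (Ideal.sum_mem _ fun i _ => Ideal.mul_mem_right _ _ ?_)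
    simpa [SModEq.sub_mem, hpow] using hL i n
  have hzero : y - ∑ i, L i * x i = 0 :=
    IsHausdorff.haus (I := I) inferInstance _ fun n => by simpa [SModEq.zero, hpow] using hdiff n
  exact Ideal.mem_span_range_iff_exists_fun.mpr ⟨L, (sub_eq_zero.mp hzero).symm⟩

theorem eq_span_range_of_sub_sum_mem_pow_succ [IsAdicComplete I R] {D : ℕ} (hxJ : ∀ i, x i ∈ J)
    (H : ∀ N, ∀ y ∈ J, y ∈ I ^ N →
      ∃ a : ι → R, (∀ i, a i ∈ I ^ (N - D)) ∧ y - ∑ i, a i * x i ∈ I ^ (N + 1)) :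
    J = Ideal.span (Set.range x) := by
  refine le_antisymm (fun y hy => ?_) (Ideal.span_le.mpr (Set.range_subset_iff.mpr hxJ))
  obtain ⟨c, hc, hyc⟩ := exists_seq_sub_sum_mem_pow hxJ H hy
  refine mem_span_range_of_sub_sum_mem_pow (fun n => c (n + D)) (fun n i => ?_)
    (fun n => Ideal.pow_le_pow_right (by omega) (hyc (n + D)))
  simpa [Nat.add_right_comm n D 1] using hc (n + D) i

end Completeness

theorem isNoetherianRing_of_isAdicComplete {R : Type*} [CommRing R] (I : Ideal R) (hI : I.FG)
    [IsAdicComplete I R] [IsNoetherianRing (R ⧸ I)] : IsNoetherianRing R := by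
  refine (isNoetherianRing_iff_ideal_fg R).mpr fun J => ?_
  obtain ⟨ι, _, x, D, hxJ, H⟩ := exists_fintype_sub_sum_mem_pow_succ hI J
  rw [eq_span_range_of_sub_sum_mem_pow_succ hxJ H]
  exact Submodule.fg_span (Set.finite_range x)

theorem isNoetherianRing_of_essFormallyOfFiniteType_general
    {A B : Type*} [CommRing A] [CommRing B]
    [IsNoetherianRing A]
    [Algebra A B] (b : Ideal B) (hb : b.FG) [IsAdicComplete b B]
    [Algebra.EssFiniteType A (B ⧸ b)] :
    IsNoetherianRing B := by
  have := Algebra.EssFiniteType.isNoetherianRing A (B ⧸ b)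
  exact isNoetherianRing_of_isAdicComplete b hb

/-- Let `k` be a noetherian ring and `A` a noetherian adic `k`-algebra with
finitely generated defining ideal `a` such that `A/a` is essentially of finite
type over `k`.  If `(B, b)` is an adic ring which is essentially formally of
finite type over `(A, a)` (that is, `B/b` is essentially of finite type over
`A`), then `B` is a noetherian ring. -/
theorem isNoetherianRing_of_essFormallyOfFiniteType
    {k A B : Type*} [CommRing k] [CommRing A] [CommRing B]
    [IsNoetherianRing k] [Algebra k A] [IsNoetherianRing A]
    (a : Ideal A) (ha : a.FG) [IsAdicComplete a A]
    [Algebra.EssFiniteType k (A ⧸ a)]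
    [Algebra A B] (b : Ideal B) (hb : b.FG) [IsAdicComplete b B]
    [Algebra.EssFiniteType A (B ⧸ b)] :
    IsNoetherianRing B :=
  isNoetherianRing_of_essFormallyOfFiniteType_general (A := A) b hb
end

section
/- Let (A, a) be a preadic ring such that the a-adic completion Â = Λ_a(A) is noetherian. Let b ⊆ A be a finitely generated ideal and b̂ = b·Â. Then for any injective A-module I, the Â-module Γ_a(I) is b̂-flasque, i.e., the higher local cohomology modules H^k_{b̂}(Γ_a(I)) vanish for all k > 0. -/
/-!
`Γ_a(I)` is in fact an injective `Â`-module, so its higher `Ext`s, and with them its higher local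
cohomology, vanish. Injectivity is Baer's criterion. A map `f` from an ideal `c` of the
noetherian ring `Â` has finitely generated image, hence lands in the `aⁿ`-torsion for some `n`;
by Artin–Rees it then kills `aᵐÂ ∩ c` for large `m` and extends by zero to `c + aᵐÂ`.
Restricted to `A`, this map extends to `Â → I` since `I` is injective; the extension kills
`aᵐÂ`, so it takes values in `Γ_a(I)`, and it is `Â`-linear because `A → Â/aᵐÂ` is surjective.
-/

open CategoryTheory Limits Submodule

section Ext

variable {R C : Type*} [Ring R] [Category C] [Abelian C] [Linear R C] [EnoughProjectives C]

theorem isZero_Ext_succ_of_injective (X Y : C) [Injective Y] (n : ℕ) :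
    IsZero (((Ext R C (n + 1)).obj (Opposite.op X)).obj Y) := by
  let P := ProjectiveResolution.of X
  refine IsZero.of_iso ?_ (P.isoExt (n + 1) Y)
  rw [← HomologicalComplex.exactAt_iff_isZero_homology,
    HomologicalComplex.exactAt_iff' _ n (n + 1) (n + 2) (by simp) (by simp),
    ShortComplex.moduleCat_exact_iff]
  intro (x : P.complex.X (n + 1) ⟶ Y) hx
  have hx' : P.complex.d (n + 2) (n + 1) ≫ x = 0 := hx
  exact ⟨(P.exact_succ n).descToInjective x hx', (P.exact_succ n).comp_descToInjective x hx'⟩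

end Ext

theorem isZero_localCohomology_succ_of_injective {R : Type*} [CommRing R] (J : Ideal R)
    (M : ModuleCat R) [Injective M] (n : ℕ) :
    IsZero ((localCohomology J (n + 1)).obj M) := by
  refine IsZero.of_iso ?_ (colimitObjIsoColimitCompEvaluation _ M)
  rw [IsZero.iff_id_eq_zero]
  exact colimit.hom_ext fun t => (isZero_Ext_succ_of_injective _ M n).eq_of_src _ _

section PowerTorsion

variable {B N : Type*} [CommRing B] [AddCommGroup N] [Module B N]

theorem Submodule.FG.exists_le_torsionBySet_pow (J : Ideal B) {M : Submodule B N} (hM : M.FG)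
    (htors : M ≤ ⨆ n, torsionBySet B N ↑(J ^ n)) : ∃ n, M ≤ torsionBySet B N ↑(J ^ n) := by
  have hmono : Monotone fun n => torsionBySet B N ↑(J ^ n) := fun i j hij =>
    torsionBySet_le_torsionBySet_pow i j hij J
  obtain ⟨_, ⟨n, rfl⟩, hn⟩ := (CompleteLattice.isCompactElement_iff_le_of_directed_sSup_le _ M).mp
    ((fg_iff_compact M).mp hM) _ (Set.range_nonempty _) hmono.directed_le.directedOn_range
    (by rwa [sSup_range])
  exact ⟨n, hn⟩

-- `hext` amounts to Baer's criterion for the `B ⧸ J ^ n`-module of `J ^ n`-torsion elements.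
theorem Module.injective_of_iSup_torsionBySet_pow_eq_top [IsNoetherianRing B] (J : Ideal B)
    (htors : ⨆ n, torsionBySet B N ↑(J ^ n) = ⊤)
    (hext : ∀ (n : ℕ) (g : B →ₗ.[B] N), J ^ n ≤ g.domain →
      (∀ x : g.domain, (x : B) ∈ J ^ n → g x = 0) → ∃ F : B →ₗ[B] N, ∀ x : g.domain, F x = g x) :
    Module.Injective B N := by
  refine Module.Baer.injective fun c f => ?_
  obtain ⟨n, hn⟩ := (Module.Finite.fg_top.map f).exists_le_torsionBySet_pow J
    (htors ▸ le_top)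
  obtain ⟨k, hk⟩ := J.exists_pow_inf_eq_pow_smul c
  have hAR : J ^ (n + k) ⊓ c ≤ J ^ n • c := by
    have := hk (n + k) (Nat.le_add_left k n)
    rw [Nat.add_sub_cancel, smul_eq_mul, Ideal.mul_top] at this
    exact this.trans_le (smul_mono_right _ inf_le_right)
  have hkill : ∀ x : c, (x : B) ∈ J ^ (n + k) → f x = 0 := by
    have : J ^ n • c ≤ (LinearMap.ker f).map c.subtype := smul_le.mpr fun r hr y hy =>
      ⟨r • ⟨y, hy⟩, by
        change f (r • _) = 0
        rw [map_smul]
        exact (mem_torsionBySet_iff _ _).mp (hn (mem_map_of_mem mem_top)) ⟨r, hr⟩, rfl⟩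
    intro x hx
    obtain ⟨y, hy, hyx⟩ := this (hAR ⟨hx, x.2⟩)
    rwa [← Subtype.ext hyx]
  have H : ∀ (x : c) (y : ↥(J ^ (n + k))), (x : B) = y → f x = (0 : _ →ₗ[B] N) y :=
    fun x y hxy => hkill x (hxy ▸ y.2)
  have hsup := LinearPMap.sup_apply (f := ⟨c, f⟩) (g := ⟨J ^ (n + k), 0⟩) H
  obtain ⟨F, hF⟩ := hext (n + k) (LinearPMap.sup ⟨c, f⟩ ⟨J ^ (n + k), 0⟩ H) le_sup_right
    fun x hx => (hsup 0 ⟨x, hx⟩ x (zero_add _)).trans (by change f 0 + 0 = 0; simp)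
  exact ⟨F, fun x hx => (hF ⟨x, mem_sup_left hx⟩).trans
    ((hsup ⟨x, hx⟩ 0 _ (add_zero x)).trans (add_zero _))⟩

end PowerTorsion

theorem Submodule.mem_torsionBySet_map_algebraMap {A B N : Type*} [CommRing A] [CommRing B]
    [Algebra A B] [AddCommGroup N] [Module A N] [Module B N] [IsScalarTower A B N] {a : Ideal A}
    {x : N} (hx : x ∈ torsionBySet A N ↑a) :
    x ∈ torsionBySet B N ↑(a.map (algebraMap A B)) := by
  have : a.map (algebraMap A B) ≤ Ideal.torsionOf B N x :=
    Ideal.map_le_iff_le_comap.mpr fun r hr => by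
      simpa [Ideal.mem_torsionOf_iff] using (mem_torsionBySet_iff _ _).mp hx ⟨r, hr⟩
  exact (mem_torsionBySet_iff _ _).mpr fun β => this β.2

theorem Submodule.mem_torsionBySet_of_injective {R M M' : Type*} [CommRing R] [AddCommGroup M]
    [AddCommGroup M'] [Module R M] [Module R M'] {s : Set R} {φ : M →ₗ[R] M'}
    (hφ : Function.Injective φ) {x : M} (hx : φ x ∈ torsionBySet R M' s) :
    x ∈ torsionBySet R M s :=
  (mem_torsionBySet_iff _ _).mpr fun r => hφ <| by
    rw [map_smul, map_zero]; exact (mem_torsionBySet_iff _ _).mp hx r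

theorem AdicCompletion.exists_sub_algebraMap_mem_map_pow {A : Type*} [CommRing A] {a : Ideal A}
    (ha : a.FG) (m : ℕ) (β : AdicCompletion a A) :
    ∃ r : A, β - algebraMap A _ r ∈ (a ^ m).map (algebraMap A (AdicCompletion a A)) := by
  obtain ⟨r, hr⟩ := Submodule.Quotient.mk_surjective _ (eval a A m β)
  refine ⟨r, (Ideal.smul_top_eq_map (a ^ m)).le ?_⟩
  rw [pow_smul_top_eq_ker_eval ha, LinearMap.mem_ker, map_sub, ← hr]
  exact sub_eq_zero.mpr (eval_of a A m r).symm

theorem LinearMap.map_mul_eq_smul_of_forall_exists_sub_mem {A B N : Type*} [CommRing A]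
    [CommRing B] [Algebra A B] [AddCommGroup N] [Module A N] [Module B N] [IsScalarTower A B N]
    {K : Ideal B} (hK : ∀ β : B, ∃ r : A, β - algebraMap A B r ∈ K) (F : B →ₗ[A] N)
    (hFK : ∀ z ∈ K, F z = 0) (hKF : ∀ z ∈ K, ∀ s, z • F s = 0) (x s : B) :
    F (x * s) = x • F s := by
  obtain ⟨r, hr⟩ := hK x
  calc F (x * s) = F (algebraMap A B r * s) + F ((x - algebraMap A B r) * s) := by
        rw [← map_add, ← add_mul, add_sub_cancel]
    _ = algebraMap A B r • F s := by
        rw [hFK _ (K.mul_mem_right s hr), add_zero, ← Algebra.smul_def, map_smul, algebraMap_smul]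
    _ = x • F s := by
        rw [← add_zero (algebraMap A B r • F s), ← hKF _ hr s, ← add_smul, add_sub_cancel]

section TorsionOfInjective

universe u

variable {A : Type u} [CommRing A] {a : Ideal A} {I : Type u} [AddCommGroup I] [Module A I]
  {N : Type*} [AddCommGroup N] [Module A N] [Module (AdicCompletion a A) N]
  [IsScalarTower A (AdicCompletion a A) N]
  (e : N ≃ₗ[A] (⨆ n : ℕ, torsionBySet A I ↑(a ^ n) : Submodule A I))

include e in
theorem mem_torsionBySet_map_of_coe_mem {x : N} {n : ℕ}
    (hx : (e x : I) ∈ torsionBySet A I ↑(a ^ n)) :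
    x ∈ torsionBySet (AdicCompletion a A) N ↑((a ^ n).map (algebraMap A (AdicCompletion a A))) :=
  mem_torsionBySet_map_algebraMap <| mem_torsionBySet_of_injective
    (φ := (Submodule.subtype _).comp e.toLinearMap) (Subtype.val_injective.comp e.injective) hx

include e in
theorem iSup_torsionBySet_map_pow_eq_top :
    ⨆ n, torsionBySet (AdicCompletion a A) N ↑(a.map (algebraMap A (AdicCompletion a A)) ^ n) =
      ⊤ := by
  refine eq_top_iff.mpr fun x _ => ?_
  have hmono : Monotone fun n => torsionBySet A I ↑(a ^ n) := fun i j hij =>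
    torsionBySet_le_torsionBySet_pow i j hij a
  obtain ⟨n, hn⟩ := (mem_iSup_of_directed _ hmono.directed_le).mp (e x).2
  refine mem_iSup_of_mem n ?_
  rw [← Ideal.map_pow]
  exact mem_torsionBySet_map_of_coe_mem e hn

include e in
theorem exists_extension_of_pow_le_domain (ha : a.FG) (hI : Module.Injective A I) (m : ℕ)
    (g : AdicCompletion a A →ₗ.[AdicCompletion a A] N)
    (hg : a.map (algebraMap A (AdicCompletion a A)) ^ m ≤ g.domain)
    (hg0 : ∀ x : g.domain, (x : AdicCompletion a A) ∈ a.map (algebraMap A _) ^ m → g x = 0) :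
    ∃ F : AdicCompletion a A →ₗ[AdicCompletion a A] N, ∀ x : g.domain, F x = g x := by
  rw [← Ideal.map_pow] at hg hg0
  obtain ⟨δ, hδ⟩ := hI.out (g.domain.subtype.restrictScalars A) Subtype.val_injective
    ((Submodule.subtype _).comp (e.toLinearMap.comp (g.toFun.restrictScalars A)))
  have hδ0 : ∀ z ∈ (a ^ m).map (algebraMap A (AdicCompletion a A)), δ z = 0 := fun z hz => by
    simpa [hg0 ⟨z, hg hz⟩ hz] using hδ ⟨z, hg hz⟩
  have hδtors : ∀ s, δ s ∈ torsionBySet A I ↑(a ^ m) := fun s =>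
    (mem_torsionBySet_iff _ _).mpr fun r => by
      rw [← map_smul, Algebra.smul_def]
      exact hδ0 _ (Ideal.mul_mem_right _ _ (Ideal.mem_map_of_mem _ r.2))
  let F₀ : AdicCompletion a A →ₗ[A] N :=
    e.symm.toLinearMap ∘ₗ
      δ.codRestrict (⨆ n : ℕ, torsionBySet A I ↑(a ^ n)) fun s => mem_iSup_of_mem m (hδtors s)
  have hF₀ : ∀ s, (e (F₀ s) : I) = δ s := fun s => by simp [F₀]
  have hF₀tors : ∀ s, F₀ s ∈
      torsionBySet (AdicCompletion a A) N ↑((a ^ m).map (algebraMap A (AdicCompletion a A))) :=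
    fun s => mem_torsionBySet_map_of_coe_mem e (by rw [hF₀]; exact hδtors s)
  have hF₀mul := F₀.map_mul_eq_smul_of_forall_exists_sub_mem
    (AdicCompletion.exists_sub_algebraMap_mem_map_pow ha m)
    (fun z hz => e.map_eq_zero_iff.mp (Subtype.ext ((hF₀ z).trans (hδ0 z hz))))
    (fun z hz s => (mem_torsionBySet_iff _ _).mp (hF₀tors s) ⟨z, hz⟩)
  refine ⟨{ F₀.toAddHom with map_smul' := hF₀mul }, fun x => e.injective (Subtype.ext ?_)⟩
  exact (hF₀ x).trans (hδ x)

include e in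
theorem injective_of_equiv_iSup_torsionBySet [IsNoetherianRing (AdicCompletion a A)]
    (ha : a.FG) (hI : Module.Injective A I) : Module.Injective (AdicCompletion a A) N :=
  Module.injective_of_iSup_torsionBySet_pow_eq_top _ (iSup_torsionBySet_map_pow_eq_top e)
    fun m g hg hg0 => exists_extension_of_pow_le_domain e ha hI m g hg hg0

end TorsionOfInjective

theorem torsion_of_injective_is_flasque_general
    {A : Type} [CommRing A] (a : Ideal A) (ha : a.FG)
    [IsNoetherianRing (AdicCompletion a A)]
    (b : Ideal A)
    (I : Type) [AddCommGroup I] [Module A I] (hI : Module.Injective A I)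
    -- `N` is the `a`-torsion submodule `Γ_a(I) = ⋃ₙ (aⁿ)-torsion`,
    -- endowed with its natural `Â`-module structure extending the `A`-action.
    (N : Type) [AddCommGroup N] [Module A N]
    [Module (AdicCompletion a A) N] [IsScalarTower A (AdicCompletion a A) N]
    (e : N ≃ₗ[A] (⨆ n : ℕ, Submodule.torsionBySet A I ((a ^ n : Ideal A) : Set A) :
        Submodule A I)) :
    ∀ k : ℕ, 0 < k →
      Limits.IsZero
        ((localCohomology (b.map (algebraMap A (AdicCompletion a A))) k).obj
          (ModuleCat.of (AdicCompletion a A) N)) := by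
  intro k hk
  obtain ⟨j, rfl⟩ := Nat.exists_eq_succ_of_ne_zero hk.ne'
  have := Module.injective_object_of_injective_module (AdicCompletion a A) N
    (inj := injective_of_equiv_iSup_torsionBySet e ha hI)
  exact isZero_localCohomology_succ_of_injective _ _ j

/-- Let `(A, a)` be a preadic ring whose `a`-adic completion `Â` is noetherian,
let `b ⊆ A` be a finitely generated ideal and `b̂ = b·Â`.  Then for any
injective `A`-module `I`, the `Â`-module `Γ_a(I)` (the `a`-torsion submodule of
`I`, with its natural `Â`-module structure) is `b̂`-flasque: the local
cohomology modules `H^k_{b̂}(Γ_a(I))` vanish for all `k > 0`. -/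
theorem torsion_of_injective_is_flasque
    {A : Type} [CommRing A] (a : Ideal A) (ha : a.FG)
    [IsNoetherianRing (AdicCompletion a A)]
    (b : Ideal A) (hb : b.FG)
    (I : Type) [AddCommGroup I] [Module A I] (hI : Module.Injective A I)
    -- `N` is the `a`-torsion submodule `Γ_a(I) = ⋃ₙ (aⁿ)-torsion`,
    -- endowed with its natural `Â`-module structure extending the `A`-action.
    (N : Type) [AddCommGroup N] [Module A N]
    [Module (AdicCompletion a A) N] [IsScalarTower A (AdicCompletion a A) N]
    (e : N ≃ₗ[A] (⨆ n : ℕ, Submodule.torsionBySet A I ((a ^ n : Ideal A) : Set A) :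
        Submodule A I)) :
    ∀ k : ℕ, 0 < k →
      Limits.IsZero
        ((localCohomology (b.map (algebraMap A (AdicCompletion a A))) k).obj
          (ModuleCat.of (AdicCompletion a A) N)) :=
  torsion_of_injective_is_flasque_general a ha b I hI N e
end

section
/- Let (A, a) be a preadic ring such that Λ_a(A) is noetherian. If P is a projective A-module, then the a-adic completion Λ_a(P) is a flat Λ_a(A)-module. -/
/-!
Writing `B = Λ_a(A)` and `b = aB`, the completion of a free module `A^(ι)` is identified, through
its coordinates, with the `B`-module of families `(x_i) ∈ B^ι` tending to zero `b`-adically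
(for each `n`, `x_i ∈ bⁿ` for all but finitely many `i`); this uses `x.val n = 0 ↔ x ∈ bⁿ`,
valid as `a` is finitely generated. Such null families form a flat module over the noetherian, `b`-adically
separated ring `B` by the equational criterion: a relation `∑ f_u x_u = 0` says that every
column `X_i = (x_u i)_u` lies in the kernel `K` of `f : B^l → B`, and Artin–Rees for `K ⊆ B^l`
lets one write `X_i` in fixed generators of `K` with coefficients that are again null in `i`.
Finally `Λ_a(P)` is a retract of `Λ_a(A^(P))` since `P` is a retract of `A^(P)`.
-/

open Submodule

section IdealSmulTop

variable {R : Type*} [CommSemiring R] (I : Ideal R)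

theorem Ideal.mem_smul_top_self_iff {x : R} : x ∈ (I • ⊤ : Submodule R R) ↔ x ∈ I := by
  rw [Ideal.smul_eq_mul, Ideal.mul_top]

theorem Finsupp.mem_ideal_smul_top_iff {ι : Type*} {g : ι →₀ R} :
    g ∈ I • (⊤ : Submodule R (ι →₀ R)) ↔ ∀ i, g i ∈ I := by
  constructor
  · intro hg
    induction hg using smul_induction_on' with
    | smul r hr g _ => exact fun i ↦ by simpa using I.mul_mem_right (g i) hr
    | add g _ g' _ h h' => exact fun i ↦ by simpa using I.add_mem (h i) (h' i)
  · intro hg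
    rw [← g.sum_single]
    exact sum_mem fun i _ ↦ by
      simpa using smul_mem_smul (hg i) (mem_top (x := Finsupp.single i (1 : R)))

theorem Pi.mem_ideal_smul_top_iff {ι : Type*} [Finite ι] {v : ι → R} :
    v ∈ I • (⊤ : Submodule R (ι → R)) ↔ ∀ i, v i ∈ I := by
  classical
  have := Fintype.ofFinite ι
  constructor
  · intro hv
    induction hv using smul_induction_on' with
    | smul r hr v _ => exact fun i ↦ by simpa using I.mul_mem_right (v i) hr
    | add v _ v' _ h h' => exact fun i ↦ by simpa using I.add_mem (h i) (h' i)
  · intro hv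
    rw [← Finset.univ_sum_single v]
    refine sum_mem fun i _ ↦ ?_
    convert smul_mem_smul (hv i) (mem_top (x := (Pi.single i 1 : ι → R))) using 1
    simp [← Pi.single_smul]

end IdealSmulTop

theorem IsHausdorff.pi {R : Type*} [CommRing R] {I : Ideal R} [IsHausdorff I R]
    {ι : Type*} [Finite ι] : IsHausdorff I (ι → R) := by
  refine isHausdorff_iff.mpr fun v hv ↦ _root_.funext fun i ↦
    IsHausdorff.haus' (I := I) (v i) fun n ↦ ?_
  have := (Pi.mem_ideal_smul_top_iff _).mp (SModEq.zero.mp (hv n)) i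
  rwa [SModEq.zero, Ideal.mem_smul_top_self_iff]

theorem Ideal.exists_artinRees_coeffs {B M : Type*} [CommRing B] [IsNoetherianRing B]
    [AddCommGroup M] [Module B M] [Module.Finite B M] (b : Ideal B) [IsHausdorff b M]
    {s : ℕ} (g : Fin s → M) :
    ∃ k, ∀ x ∈ Submodule.span B (Set.range g), ∃ c : Fin s → B, x = ∑ t, c t • g t ∧
      ∀ n, x ∈ b ^ (n + k) • (⊤ : Submodule B M) → ∀ t, c t ∈ b ^ n := by
  classical
  obtain ⟨k, hk⟩ := b.exists_pow_inf_eq_pow_smul (Submodule.span B (Set.range g))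
  refine ⟨k, fun x hx ↦ ?_⟩
  by_cases hdeep : ∀ n, x ∈ b ^ (n + k) • (⊤ : Submodule B M)
  · have hx0 : x = 0 := IsHausdorff.haus' x fun n ↦ SModEq.zero.mpr <|
      Submodule.smul_mono_left (Ideal.pow_le_pow_right (Nat.le_add_right n k)) (hdeep n)
    exact ⟨0, by simp [hx0], fun n _ t ↦ zero_mem _⟩
  replace hdeep := not_forall.mp hdeep
  let N := Nat.find hdeep
  have hxN : x ∈ b ^ (N - 1) • Submodule.span B (Set.range g) := by
    rcases Nat.eq_zero_or_pos N with hN | hN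
    · simpa [hN] using hx
    have hmem : x ∈ b ^ (N - 1 + k) • (⊤ : Submodule B M) :=
      not_not.mp (Nat.find_min hdeep (by omega))
    have hAR := hk (N - 1 + k) (by omega)
    rw [Nat.add_sub_cancel] at hAR
    have hxAR : x ∈ b ^ (N - 1 + k) • (⊤ : Submodule B M) ⊓ Submodule.span B (Set.range g) :=
      ⟨hmem, hx⟩
    rw [hAR] at hxAR
    exact Submodule.smul_mono le_rfl inf_le_right hxAR
  obtain ⟨c, hc, hxc⟩ := (mem_ideal_smul_span_iff_exists_sum _ g x).mp hxN
  refine ⟨c, by rw [← hxc, Finsupp.sum_fintype _ _ (by simp)], fun n hn t ↦ ?_⟩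
  have hnN : n < N := by
    by_contra! hle
    exact Nat.find_spec hdeep
      (Submodule.smul_mono_left (Ideal.pow_le_pow_right (by omega)) hn)
  exact Ideal.pow_le_pow_right (by omega) (hc t)

namespace Ideal

variable {B : Type*} [CommRing B] (b : Ideal B) (ι : Type*)

def nullFamilies : Submodule B (ι → B) where
  carrier := {x | ∀ n, {i | x i ∉ b ^ n}.Finite}
  add_mem' {x y} hx hy n := ((hx n).union (hy n)).subset fun i hi ↦ by
    by_contra h
    simp only [Set.mem_union, Set.mem_ofPred_eq, not_or, not_not] at h
    exact hi (add_mem h.1 h.2)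
  zero_mem' n := by simp
  smul_mem' r x hx n := (hx n).subset fun i hi h ↦ hi (mul_mem_left _ r h)

theorem flat_nullFamilies [IsNoetherianRing B] [IsHausdorff b B] :
    Module.Flat B (b.nullFamilies ι) := by
  refine Module.Flat.of_forall_isTrivialRelation fun {l f x} hfx ↦ ?_
  obtain ⟨s, g, hg⟩ := Submodule.fg_iff_exists_fin_generating_family.mp
    (IsNoetherian.noetherian (LinearMap.ker (Fintype.linearCombination B f)))
  have : IsHausdorff b (Fin l → B) := IsHausdorff.pi
  obtain ⟨k, hk⟩ := b.exists_artinRees_coeffs g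
  let X : ι → Fin l → B := fun i u ↦ (x u : ι → B) i
  have hXK : ∀ i, X i ∈ Submodule.span B (Set.range g) := fun i ↦ by
    rw [hg, LinearMap.mem_ker, Fintype.linearCombination_apply]
    simpa [X, mul_comm] using congr_fun (congr_arg Subtype.val hfx) i
  choose c hXc hc using fun i ↦ hk (X i) (hXK i)
  have hX : ∀ n, {i | X i ∉ b ^ n • (⊤ : Submodule B (Fin l → B))}.Finite := fun n ↦
    (Set.finite_iUnion fun u ↦ (x u).2 n).subset fun i hi ↦ by
      simp only [Set.mem_iUnion, Set.mem_ofPred_eq]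
      by_contra! h
      exact hi ((Pi.mem_ideal_smul_top_iff _).mpr h)
  let y : Fin s → b.nullFamilies ι := fun t ↦
    ⟨fun i ↦ c i t, fun n ↦ (hX (n + k)).subset fun i hi hXi ↦ hi (hc i n hXi t)⟩
  refine ⟨s, fun u t ↦ g t u, y, fun u ↦ Subtype.ext (funext fun i ↦ ?_), fun t ↦ ?_⟩
  · simpa [y, X, mul_comm] using congr_fun (hXc i) u
  · have : g t ∈ LinearMap.ker (Fintype.linearCombination B f) :=
      hg ▸ Submodule.subset_span (Set.mem_range_self t)
    simpa [Fintype.linearCombination_apply, mul_comm] using this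

end Ideal

section FinsuppQuotient

variable {R : Type*} [CommRing R] (I : Ideal R) {ι : Type*}

theorem Finsupp.ext_reduceModIdeal_lapply {q q' : (ι →₀ R) ⧸ (I • ⊤ : Submodule R (ι →₀ R))}
    (h : ∀ i, (Finsupp.lapply i).reduceModIdeal I q = (Finsupp.lapply i).reduceModIdeal I q') :
    q = q' := by
  induction q using Submodule.Quotient.induction_on with | _ g
  induction q' using Submodule.Quotient.induction_on with | _ g'
  refine (Submodule.Quotient.eq _).mpr ((Finsupp.mem_ideal_smul_top_iff I).mpr fun i ↦ ?_)
  have := (Submodule.Quotient.eq _).mp (h i)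
  rwa [Ideal.mem_smul_top_self_iff] at this

theorem Finsupp.exists_reduceModIdeal_lapply_eq (q : ι → R ⧸ (I • ⊤ : Submodule R R))
    (hq : (Function.support q).Finite) :
    ∃ g : ι →₀ R, ∀ i, (Finsupp.lapply i).reduceModIdeal I (Submodule.Quotient.mk g) = q i := by
  obtain ⟨g, hg⟩ := Finsupp.mapRange_surjective _ (Submodule.Quotient.mk_zero _)
    (Submodule.Quotient.mk_surjective _) (Finsupp.ofSupportFinite q hq)
  exact ⟨g, fun i ↦ DFunLike.congr_fun hg i⟩

end FinsuppQuotient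

namespace AdicCompletion

variable {A : Type*} [CommRing A] (a : Ideal A)

theorem val_eq_zero_iff_mem_map_pow (ha : a.FG) {n : ℕ} {x : AdicCompletion a A} :
    x.val n = 0 ↔ x ∈ a.map (algebraMap A (AdicCompletion a A)) ^ n := by
  rw [← Ideal.map_pow, ← Submodule.restrictScalars_mem A, ← Ideal.smul_top_eq_map,
    pow_smul_top_eq_ker_eval ha]
  rfl

variable (ι : Type*)

noncomputable def finsuppToPi :
    AdicCompletion a (ι →₀ A) →ₗ[AdicCompletion a A] ι → AdicCompletion a A :=
  LinearMap.pi fun i ↦ map a (Finsupp.lapply i)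

theorem finsuppToPi_val (x : AdicCompletion a (ι →₀ A)) (i : ι) (n : ℕ) :
    (finsuppToPi a ι x i).val n = (Finsupp.lapply i).reduceModIdeal (a ^ n) (x.val n) :=
  rfl

theorem finsuppToPi_injective : Function.Injective (finsuppToPi a ι) := fun _ _ h ↦
  ext fun n ↦ Finsupp.ext_reduceModIdeal_lapply _ fun i ↦ congr_arg (fun x ↦ (x i).val n) h

theorem range_finsuppToPi (ha : a.FG) :
    LinearMap.range (finsuppToPi a ι) = (a.map (algebraMap A _)).nullFamilies ι := by
  apply le_antisymm
  · rintro _ ⟨v, rfl⟩ n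
    obtain ⟨g, hg⟩ := Submodule.Quotient.mk_surjective _ (v.val n)
    refine g.support.finite_toSet.subset fun i hi ↦ ?_
    rw [Finset.mem_coe, Finsupp.mem_support_iff]
    contrapose! hi
    rw [Set.mem_ofPred_eq, not_not, ← val_eq_zero_iff_mem_map_pow a ha, finsuppToPi_val, ← hg]
    exact congr_arg Submodule.Quotient.mk hi
  · intro x hx
    have hfin : ∀ n, (Function.support fun i ↦ (x i).val n).Finite := fun n ↦
      (hx n).subset fun i hi ↦ by
        rwa [Function.mem_support, Ne, val_eq_zero_iff_mem_map_pow a ha] at hi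
    choose g hg using fun n ↦ Finsupp.exists_reduceModIdeal_lapply_eq (a ^ n) _ (hfin n)
    refine ⟨⟨fun n ↦ Submodule.Quotient.mk (g n), fun {m n} hmn ↦
      Finsupp.ext_reduceModIdeal_lapply _ fun i ↦ ?_⟩, ?_⟩
    · rw [hg m i, ← transitionMap_comp_eval_apply _ _ hmn, ← hg n i]
      rfl
    · funext i
      exact ext fun n ↦ hg n i

theorem flat_finsupp [IsNoetherianRing (AdicCompletion a A)] (ha : a.FG) :
    Module.Flat (AdicCompletion a A) (AdicCompletion a (ι →₀ A)) := by
  have : IsHausdorff (a.map (algebraMap A (AdicCompletion a A))) (AdicCompletion a A) :=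
    IsHausdorff.map_algebraMap_iff.mpr inferInstance
  have := Ideal.flat_nullFamilies (a.map (algebraMap A (AdicCompletion a A))) ι
  exact Module.Flat.of_linearEquiv <|
    (LinearEquiv.ofInjective _ (finsuppToPi_injective a ι)).trans
      (LinearEquiv.ofEq _ _ (range_finsuppToPi a ι ha))

end AdicCompletion

/-- Let `(A, a)` be a preadic ring such that `Λ_a(A)` is noetherian.  If `P` is
a projective `A`-module, then the `a`-adic completion `Λ_a(P)` is a flat
`Λ_a(A)`-module. -/
theorem adicCompletion_flat_of_projective
    {A : Type*} [CommRing A] (a : Ideal A) (ha : a.FG)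
    [IsNoetherianRing (AdicCompletion a A)]
    (P : Type*) [AddCommGroup P] [Module A P] [Module.Projective A P] :
    Module.Flat (AdicCompletion a A) (AdicCompletion a P) := by
  obtain ⟨s, hs⟩ := Module.projective_def'.mp ‹Module.Projective A P›
  have := AdicCompletion.flat_finsupp a P ha
  refine Module.Flat.of_retract (AdicCompletion.map a s)
    (AdicCompletion.map a (Finsupp.linearCombination A id)) ?_
  rw [AdicCompletion.map_comp, hs, AdicCompletion.map_id]
end
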